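/- Let X and Y be Banach spaces with a common closed subspace Z (i.e., Z embeds isometrically into both X and Y). Consider the direct sum X ⊕ Y with norm ‖(x,y)‖ = ‖x‖_X + ‖y‖_Y, let Δ = {(z,−z) : z ∈ Z}, and let W = (X ⊕ Y)/Δ. Then the linear map i' : X → W defined by i'(x) = (x,0) + Δ is an isometry, i.e., ‖i'(x)‖_W = ‖x‖_X for all x ∈ X. -/

import Mathlib

/-! The ℓ¹-norm of `(x, 0) + (iX z, -iY z)` is `‖x + iX z‖ + ‖z‖ ≥ ‖x‖`, so `(x, 0)` is already
a norm-minimising representative of its class modulo `Δ`. -/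

theorem Submodule.Quotient.norm_mk_eq_norm_of_forall_le {R M : Type*} [Ring R]
    [SeminormedAddCommGroup M] [Module R M] {S : Submodule R M} {m : M}
    (h : ∀ s ∈ S, ‖m‖ ≤ ‖m + s‖) : ‖(Submodule.Quotient.mk m : M ⧸ S)‖ = ‖m‖ := by
  refine le_antisymm (Submodule.Quotient.norm_mk_le S m) ?_
  refine QuotientAddGroup.le_norm_iff.mpr fun m' hm' => ?_
  have hdiff : m' - m ∈ S := (Submodule.Quotient.eq S).mp hm'
  simpa using h _ hdiff

theorem WithLp.norm_le_prod_norm_toLp_one_add {X Y : Type*} [SeminormedAddCommGroup X]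
    [SeminormedAddCommGroup Y] (x a : X) {b : Y} (hab : ‖a‖ ≤ ‖b‖) :
    ‖x‖ ≤ ‖WithLp.toLp 1 (x + a, b)‖ :=
  calc ‖x‖ ≤ ‖x + a‖ + ‖a‖ := by simpa using norm_sub_le (x + a) a
    _ ≤ ‖x + a‖ + ‖b‖ := by gcongr
    _ = ‖WithLp.toLp 1 (x + a, b)‖ := by rw [WithLp.prod_norm_eq_of_L1]; rfl

theorem stmt0_general
    {X Y Z : Type*}
    [NormedAddCommGroup X] [NormedSpace ℝ X]
    [NormedAddCommGroup Y] [NormedSpace ℝ Y]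
    [NormedAddCommGroup Z] [NormedSpace ℝ Z]
    (iX : Z →ₗᵢ[ℝ] X) (iY : Z →ₗᵢ[ℝ] Y)
    (Δ : Submodule ℝ (WithLp 1 (X × Y)))
    (hΔ : (Δ : Set (WithLp 1 (X × Y))) =
      Set.range (fun z : Z => (WithLp.toLp 1 (iX z, -iY z) : WithLp 1 (X × Y))))
    (x : X) :
    ‖(Submodule.Quotient.mk (WithLp.toLp 1 (x, (0 : Y)) : WithLp 1 (X × Y)) :
        WithLp 1 (X × Y) ⧸ Δ)‖ = ‖x‖ := by
  have hx : ‖WithLp.toLp 1 (x, (0 : Y))‖ = ‖x‖ := by simp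
  rw [← hx]
  refine Submodule.Quotient.norm_mk_eq_norm_of_forall_le fun s hs => ?_
  rw [← SetLike.mem_coe, hΔ] at hs
  obtain ⟨z, rfl⟩ := hs
  have hnorm : ‖iX z‖ ≤ ‖-iY z‖ := by rw [norm_neg, iX.norm_map, iY.norm_map]
  calc ‖WithLp.toLp 1 (x, (0 : Y))‖ = ‖x‖ := hx
    _ ≤ ‖WithLp.toLp 1 (x + iX z, -iY z)‖ := WithLp.norm_le_prod_norm_toLp_one_add x _ hnorm
    _ = _ := by rw [← WithLp.toLp_add, Prod.mk_add_mk, zero_add]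

/-- In the amalgamation `W = (X ⊕₁ Y)/Δ`, where `Z` is a common closed
subspace of the Banach spaces `X` and `Y` (via linear isometric embeddings `iX`, `iY`),
`X ⊕₁ Y` carries the norm `‖(x,y)‖ = ‖x‖ + ‖y‖` and `Δ = {(iX z, -iY z) : z ∈ Z}`,
the map `i' : x ↦ (x,0) + Δ` is an isometry: `‖i'(x)‖_W = ‖x‖_X` for all `x`. -/
theorem stmt0
    {X Y Z : Type*}
    [NormedAddCommGroup X] [NormedSpace ℝ X] [CompleteSpace X]
    [NormedAddCommGroup Y] [NormedSpace ℝ Y] [CompleteSpace Y]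
    [NormedAddCommGroup Z] [NormedSpace ℝ Z] [CompleteSpace Z]
    (iX : Z →ₗᵢ[ℝ] X) (iY : Z →ₗᵢ[ℝ] Y)
    (Δ : Submodule ℝ (WithLp 1 (X × Y)))
    (hΔ : (Δ : Set (WithLp 1 (X × Y))) =
      Set.range (fun z : Z => (WithLp.toLp 1 (iX z, -iY z) : WithLp 1 (X × Y))))
    (x : X) :
    ‖(Submodule.Quotient.mk (WithLp.toLp 1 (x, (0 : Y)) : WithLp 1 (X × Y)) :
        WithLp 1 (X × Y) ⧸ Δ)‖ = ‖x‖ :=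
  stmt0_general iX iY Δ hΔ x
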